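/- Assume σ₂(W) < 1. Let f : ℝ^{m×n} → ℝ be convex and differentiable with gradient ∇f, let M ≥ 0, and let h : ℝ^{m×n} → ℝ be convex and (√m·M)-Lipschitz, i.e. |h(x) − h(y)| ≤ √m·M·‖x − y‖_F for all x, y. Suppose x* minimizes F = f + h over the subspace {x ∈ ℝ^{m×n} : Ux = 0}. Then there exist g ∈ ℝ^{m×n} with h(y) ≥ h(x*) + ⟨g, y − x*⟩ for all y (a subgradient of h at x*) and λ* ∈ ℝ^{m×n} such that ∇f(x*) + g + Uλ* = 0 and ‖λ*‖_F ≤ (√m·M + ‖∇f(x*)‖_F) / √(1 − σ₂(W)). -/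

import Mathlib

open scoped RealInnerProductSpace

/-- Left multiplication of `x ∈ ℝ^{m×n}` by an `m × m` matrix `A`,
with `ℝ^{m×n}` viewed as a Euclidean space with the Frobenius inner product. -/
noncomputable def matApply {m n : ℕ} (A : Matrix (Fin m) (Fin m) ℝ)
    (x : EuclideanSpace ℝ (Fin m × Fin n)) : EuclideanSpace ℝ (Fin m × Fin n) :=
  WithLp.toLp 2 (fun p : Fin m × Fin n => ∑ k : Fin m, A p.1 k * x (k, p.2))

/-!
Expanding `f` to first order shows that `x*` minimizes the convex continuous function
`h + ⟪∇f(x*), ·⟫` on the coset `x* + ker U`. Separating its strict epigraph from that coset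
(Hahn–Banach) yields a subgradient `g` of `h` at `x*` with `∇f(x*) + g ⊥ ker U`, i.e.
`∇f(x*) + g ∈ range U` since `U` is symmetric. Choosing `λ*` in `range U` too, its columns sum to
zero because `U 1 = 0`, so the spectral gap gives
`√(1 - σ) ‖λ*‖ ≤ ‖U λ*‖ = ‖∇f(x*) + g‖ ≤ ‖∇f(x*)‖ + √m M`,
a subgradient of a Lipschitz function being bounded by the Lipschitz constant.
-/

open scoped NNReal
open Set Matrix LinearMap

section Separation

variable {E : Type*} [NormedAddCommGroup E] [NormedSpace ℝ E]

lemma eq_zero_of_forall_le_mul_add {a b u : ℝ} (h : ∀ s : ℝ, u ≤ s * b + a) : b = 0 := by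
  by_contra hb
  have := h ((u - a - 1) / b)
  rw [div_mul_cancel₀ _ hb] at this
  linarith

theorem ConvexOn.exists_strongDual_vanishing_le_of_forall_le_add {H : E → ℝ}
    (hconv : ConvexOn ℝ univ H) (hcont : Continuous H) {K : Submodule ℝ E} {x : E}
    (hmin : ∀ k ∈ K, H x ≤ H (x + k)) :
    ∃ ℓ : StrongDual ℝ E, (∀ k ∈ K, ℓ k = 0) ∧ ∀ y, H x + ℓ (y - x) ≤ H y := by
  set coset := (fun p => (x, H x) + p) '' (LinearMap.inl ℝ E ℝ '' K)
  have hopen : IsOpen {p : E × ℝ | p.1 ∈ univ ∧ H p.1 < p.2} := by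
    simpa using isOpen_lt (hcont.comp continuous_fst) continuous_snd
  have hdisj : Disjoint {p : E × ℝ | p.1 ∈ univ ∧ H p.1 < p.2} coset := by
    rw [Set.disjoint_right]
    rintro _ ⟨_, ⟨k, hk, rfl⟩, rfl⟩ ⟨-, hlt⟩
    have hlt' : H (x + k) < H x := by simpa using hlt
    exact (hmin k hk).not_gt hlt'
  obtain ⟨φ, u, hlt, hle⟩ := geometric_hahn_banach_open hconv.convex_strict_epigraph hopen
    ((K.convex.linear_image _).translate _) hdisj
  set ℓ₀ := φ.comp (ContinuousLinearMap.inl ℝ E ℝ)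
  set c := φ (0, 1)
  have hφ : ∀ y t, φ (y, t) = ℓ₀ y + t * c := by
    intro y t
    rw [show ((y, t) : E × ℝ) = (y, 0) + t • (0, 1) by simp, map_add, map_smul, smul_eq_mul]
    rfl
  have hφK : ∀ k ∈ K, u ≤ ℓ₀ k + φ (x, H x) := by
    intro k hk
    have := hle _ ⟨_, ⟨k, hk, rfl⟩, rfl⟩
    simp only [LinearMap.inl_apply, Prod.mk_add_mk, add_zero, hφ, map_add] at this ⊢
    linarith
  -- the separating hyperplane is not vertical
  have hc : c < 0 := by
    have h1 := hlt (x, H x + 1) ⟨trivial, lt_add_one _⟩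
    have h2 := hφK 0 K.zero_mem
    rw [hφ] at h1
    rw [map_zero, hφ] at h2
    linarith
  have hℓ₀K : ∀ k ∈ K, ℓ₀ k = 0 := fun k hk =>
    eq_zero_of_forall_le_mul_add fun s => by
      simpa using hφK (s • k) (K.smul_mem s hk)
  refine ⟨(-c)⁻¹ • ℓ₀, fun k hk => by simp [hℓ₀K k hk], fun y => ?_⟩
  have hsupp : ℓ₀ (y - x) ≤ (-c) * (H y - H x) := by
    refine le_of_forall_pos_lt_add fun ε hε => ?_
    have h1 := hlt (y, H y + ε / (-c))
      ⟨trivial, lt_add_of_pos_right _ (div_pos hε (neg_pos.2 hc))⟩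
    have h2 := hφK 0 K.zero_mem
    have hεc : ε / (-c) * c = -ε := by rw [div_neg, neg_mul, div_mul_cancel₀ _ hc.ne]
    rw [hφ, add_mul, hεc] at h1
    rw [hφ, map_zero] at h2
    rw [map_sub]
    linarith
  have := mul_le_mul_of_nonneg_left hsupp (inv_nonneg.2 (neg_nonneg.2 hc.le))
  rw [inv_mul_cancel_left₀ (by linarith)] at this
  simp only [FunLike.coe_smul, Pi.smul_apply, smul_eq_mul]
  linarith

end Separation

section InnerProductSpace

variable {E : Type*} [NormedAddCommGroup E] [InnerProductSpace ℝ E]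

def HasSubgradientAt (h : E → ℝ) (g x : E) : Prop :=
  ∀ y, h x + ⟪g, y - x⟫ ≤ h y

theorem HasSubgradientAt.norm_le {h : E → ℝ} {g x : E} {L : ℝ≥0} (hg : HasSubgradientAt h g x)
    (hh : LipschitzWith L h) : ‖g‖ ≤ L := by
  have hsq : ‖g‖ ^ 2 ≤ L * ‖g‖ :=
    calc ‖g‖ ^ 2 = ⟪g, (x + g) - x⟫ := by rw [add_sub_cancel_left, real_inner_self_eq_norm_sq]
      _ ≤ h (x + g) - h x := by linarith [hg (x + g)]
      _ ≤ L * ‖g‖ := by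
        simpa [Real.dist_eq, dist_eq_norm] using (le_abs_self _).trans (hh.dist_le_mul (x + g) x)
  nlinarith [norm_nonneg g, L.coe_nonneg]

theorem ConvexOn.exists_hasSubgradientAt_mem_orthogonal [CompleteSpace E] {H : E → ℝ}
    (hconv : ConvexOn ℝ univ H) (hcont : Continuous H) {K : Submodule ℝ E} {x : E}
    (hmin : ∀ k ∈ K, H x ≤ H (x + k)) :
    ∃ g ∈ Kᗮ, HasSubgradientAt H g x := by
  obtain ⟨ℓ, hℓK, hℓ⟩ := hconv.exists_strongDual_vanishing_le_of_forall_le_add hcont hmin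
  refine ⟨(InnerProductSpace.toDual ℝ E).symm ℓ, fun k hk => ?_, fun y => ?_⟩
  · rw [real_inner_comm, InnerProductSpace.toDual_symm_apply, hℓK k hk]
  · simpa [InnerProductSpace.toDual_symm_apply] using hℓ y

theorem le_add_inner_of_forall_le_add [CompleteSpace E] {f h : E → ℝ} {f' x v : E}
    (hf : HasGradientAt f f' x) (hh : ConvexOn ℝ univ h)
    (hmin : ∀ t ∈ Ioc (0 : ℝ) 1, f x + h x ≤ f (x + t • v) + h (x + t • v)) :
    h x ≤ h (x + v) + ⟪f', v⟫ := by
  have hslope := (hf.hasFDerivAt.hasLineDerivAt v).tendsto_slope_zero_right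
  have hquot : ∀ t ∈ Ioc (0 : ℝ) 1, h x - h (x + v) ≤ t⁻¹ • (f (x + t • v) - f x) := by
    intro t ⟨ht0, ht1⟩
    have hconv := hh.2 (mem_univ x) (mem_univ (x + v)) (sub_nonneg.2 ht1) ht0.le (by ring)
    rw [show (1 - t) • x + t • (x + v) = x + t • v by module, smul_eq_mul, smul_eq_mul] at hconv
    rw [smul_eq_mul, le_inv_mul_iff₀ ht0]
    linarith [hmin t ⟨ht0, ht1⟩]
  have hlim : h x - h (x + v) ≤ ⟪f', v⟫ := ge_of_tendsto hslope <| by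
    filter_upwards [Ioc_mem_nhdsGT zero_lt_one] with t ht using hquot t ht
  linarith

theorem exists_hasSubgradientAt_add_mem_orthogonal [CompleteSpace E] {f h : E → ℝ} {f' x : E}
    {K : Submodule ℝ E}
    (hf : HasGradientAt f f' x) (hh : ConvexOn ℝ univ h) (hhc : Continuous h)
    (hmin : ∀ k ∈ K, f x + h x ≤ f (x + k) + h (x + k)) :
    ∃ g, HasSubgradientAt h g x ∧ f' + g ∈ Kᗮ := by
  set H := fun y => h y + ⟪f', y⟫
  have hHmin : ∀ k ∈ K, H x ≤ H (x + k) := fun k hk => by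
    have := le_add_inner_of_forall_le_add hf hh fun t _ => hmin (t • k) (K.smul_mem t hk)
    simp only [H, inner_add_right]
    linarith
  have hHconv : ConvexOn ℝ univ H := hh.add ((innerSL ℝ f').toLinearMap.convexOn convex_univ)
  obtain ⟨g, hgK, hg⟩ := hHconv.exists_hasSubgradientAt_mem_orthogonal
    (hhc.add (innerSL ℝ f').continuous) hHmin
  refine ⟨g - f', fun y => ?_, by simpa using hgK⟩
  have := hg y
  simp only [H, inner_sub_left, inner_sub_right] at this ⊢
  linarith

end InnerProductSpace

namespace LinearMap.IsSymmetric

variable {𝕜 E : Type*} [RCLike 𝕜] [NormedAddCommGroup E] [InnerProductSpace 𝕜 E]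
  [FiniteDimensional 𝕜 E] {T : E →ₗ[𝕜] E}

theorem orthogonal_ker (hT : T.IsSymmetric) : (ker T)ᗮ = range T := by
  rw [T.orthogonal_ker, hT.adjoint_eq]

theorem exists_mem_range_apply_eq (hT : T.IsSymmetric) {y : E} (hy : y ∈ range T) :
    ∃ x ∈ range T, T x = y := by
  obtain ⟨z, rfl⟩ := hy
  refine ⟨(range T).starProjection z, (range T).starProjection_apply_mem z, ?_⟩
  have hker : z - (range T).starProjection z ∈ ker T := by
    rw [← hT.orthogonal_range]
    exact Submodule.sub_starProjection_mem_orthogonal z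
  rw [mem_ker, map_sub, sub_eq_zero] at hker
  exact hker.symm

end LinearMap.IsSymmetric

namespace Matrix

variable {ι : Type*} [Fintype ι]

theorem IsSymm.mulVec_dotProduct {R : Type*} [CommSemiring R] {A : Matrix ι ι R}
    (hA : A.IsSymm) (v w : ι → R) : A *ᵥ v ⬝ᵥ w = v ⬝ᵥ A *ᵥ w := by
  rw [dotProduct_mulVec, ← mulVec_transpose, hA.eq]

theorem sum_mulVec_eq_zero_of_mulVec_one {A : Matrix ι ι ℝ} (hA : A.IsSymm)
    (hA1 : A *ᵥ (fun _ => 1) = 0) (v : ι → ℝ) : ∑ i, (A *ᵥ v) i = 0 := by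
  have := hA.mulVec_dotProduct (fun _ => 1) v
  rw [hA1, zero_dotProduct] at this
  simpa [dotProduct] using this.symm

variable [DecidableEq ι] {U W : Matrix ι ι ℝ}

theorem mulVec_one_eq_zero_of_mul_self_eq (hU : U.IsSymm) (hUU : U * U = 1 - W)
    (hW1 : W *ᵥ (fun _ => 1) = fun _ => 1) : U *ᵥ (fun _ => 1) = 0 := by
  rw [← dotProduct_self_eq_zero, hU.mulVec_dotProduct, mulVec_mulVec, hUU, sub_mulVec,
    one_mulVec, hW1, sub_self, dotProduct_zero]

theorem sub_mul_dotProduct_self_le_of_mul_self_eq {σ : ℝ} (hU : U.IsSymm) (hUU : U * U = 1 - W)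
    (hσ : ∀ v : ι → ℝ, ∑ i, v i = 0 → v ⬝ᵥ W *ᵥ v ≤ σ * v ⬝ᵥ v) {v : ι → ℝ}
    (hv : ∑ i, v i = 0) : (1 - σ) * v ⬝ᵥ v ≤ U *ᵥ v ⬝ᵥ U *ᵥ v := by
  rw [hU.mulVec_dotProduct, mulVec_mulVec, hUU, sub_mulVec, one_mulVec, dotProduct_sub]
  linarith [hσ v hv]

end Matrix

section MatApply

variable {m n : ℕ}

def matCol (x : EuclideanSpace ℝ (Fin m × Fin n)) (j : Fin n) : Fin m → ℝ :=
  fun i => x (i, j)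

theorem matCol_matApply (A : Matrix (Fin m) (Fin m) ℝ) (x : EuclideanSpace ℝ (Fin m × Fin n))
    (j : Fin n) : matCol (matApply A x) j = A *ᵥ matCol x j :=
  rfl

theorem inner_eq_sum_dotProduct_matCol (x y : EuclideanSpace ℝ (Fin m × Fin n)) :
    ⟪x, y⟫ = ∑ j, matCol x j ⬝ᵥ matCol y j := by
  simp only [PiLp.inner_apply, RCLike.inner_apply, conj_trivial, Fintype.sum_prod_type, matCol,
    dotProduct]
  rw [Finset.sum_comm]
  exact Finset.sum_congr rfl fun _ _ => Finset.sum_congr rfl fun _ _ => mul_comm _ _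

@[simps]
noncomputable def matApplyₗ (A : Matrix (Fin m) (Fin m) ℝ) :
    EuclideanSpace ℝ (Fin m × Fin n) →ₗ[ℝ] EuclideanSpace ℝ (Fin m × Fin n) where
  toFun := matApply A
  map_add' x y := by
    ext p
    simp [matApply, mul_add, Finset.sum_add_distrib]
  map_smul' c x := by
    ext p
    simp [matApply, Finset.mul_sum, mul_left_comm]

theorem isSymmetric_matApplyₗ {A : Matrix (Fin m) (Fin m) ℝ} (hA : A.IsSymm) :
    (matApplyₗ A : EuclideanSpace ℝ (Fin m × Fin n) →ₗ[ℝ] _).IsSymmetric := fun x y => by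
  simp only [matApplyₗ_apply, inner_eq_sum_dotProduct_matCol, matCol_matApply,
    hA.mulVec_dotProduct]

theorem sum_matApply_eq_zero_of_mulVec_one {A : Matrix (Fin m) (Fin m) ℝ} (hA : A.IsSymm)
    (hA1 : A *ᵥ (fun _ => 1) = 0) (x : EuclideanSpace ℝ (Fin m × Fin n)) (j : Fin n) :
    ∑ i, matApply A x (i, j) = 0 :=
  Matrix.sum_mulVec_eq_zero_of_mulVec_one hA hA1 (matCol x j)

theorem sqrt_one_sub_mul_norm_le_norm_matApply {U W : Matrix (Fin m) (Fin m) ℝ} {σ : ℝ}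
    (hU : U.IsSymm) (hUU : U * U = 1 - W)
    (hσ : ∀ v : Fin m → ℝ, ∑ i, v i = 0 → v ⬝ᵥ W *ᵥ v ≤ σ * v ⬝ᵥ v)
    {x : EuclideanSpace ℝ (Fin m × Fin n)} (hx : ∀ j, ∑ i, x (i, j) = 0) :
    √(1 - σ) * ‖x‖ ≤ ‖matApply U x‖ := by
  have hsq : (1 - σ) * ‖x‖ ^ 2 ≤ ‖matApply U x‖ ^ 2 := by
    simp only [← real_inner_self_eq_norm_sq, inner_eq_sum_dotProduct_matCol, matCol_matApply,
      Finset.mul_sum]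
    exact Finset.sum_le_sum fun j _ =>
      Matrix.sub_mul_dotProduct_self_le_of_mul_self_eq hU hUU hσ (hx j)
  calc √(1 - σ) * ‖x‖ = √((1 - σ) * ‖x‖ ^ 2) := by
        rw [Real.sqrt_mul' _ (sq_nonneg _), Real.sqrt_sq (norm_nonneg _)]
    _ ≤ √(‖matApply U x‖ ^ 2) := Real.sqrt_le_sqrt hsq
    _ = ‖matApply U x‖ := Real.sqrt_sq (norm_nonneg _)

end MatApply

theorem stmt11_general (m n : ℕ)
    (W U : Matrix (Fin m) (Fin m) ℝ) (σ : ℝ)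
    (hW1 : W.mulVec (fun _ => (1 : ℝ)) = fun _ => (1 : ℝ))
    (hUpsd : U.PosSemidef) (hUU : U * U = 1 - W)
    -- `σ` is (an upper bound for) the second largest eigenvalue of `W`:
    -- it bounds the Rayleigh quotient of `W` on the orthogonal complement of `1`
    (hσ : ∀ v : Fin m → ℝ, (∑ i, v i) = 0 →
      dotProduct v (W.mulVec v) ≤ σ * dotProduct v v)
    (hσ1 : σ < 1)
    (f h : EuclideanSpace ℝ (Fin m × Fin n) → ℝ)
    (gf : EuclideanSpace ℝ (Fin m × Fin n) → EuclideanSpace ℝ (Fin m × Fin n))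
    (hgrad : ∀ x, HasGradientAt f (gf x) x)
    (M : ℝ) (hM : 0 ≤ M)
    (hhconv : ConvexOn ℝ Set.univ h)
    (hhlip : ∀ x y, |h x - h y| ≤ Real.sqrt m * M * ‖x - y‖)
    (xs : EuclideanSpace ℝ (Fin m × Fin n))
    (hxs : matApply U xs = 0)
    (hmin : ∀ y, matApply U y = 0 → f xs + h xs ≤ f y + h y) :
    ∃ g lam : EuclideanSpace ℝ (Fin m × Fin n),
      (∀ y, h xs + ⟪g, y - xs⟫ ≤ h y) ∧
      gf xs + g + matApply U lam = 0 ∧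
      ‖lam‖ ≤ (Real.sqrt m * M + ‖gf xs‖) / Real.sqrt (1 - σ) := by
  have hU : U.IsSymm := isHermitian_iff_isSymm.1 hUpsd.isHermitian
  have hT := isSymmetric_matApplyₗ (n := n) hU
  have hL : 0 ≤ √m * M := by positivity
  have hlip : LipschitzWith (√m * M).toNNReal h := .of_dist_le_mul fun x y => by
    simpa [Real.dist_eq, dist_eq_norm, Real.coe_toNNReal _ hL] using hhlip x y
  obtain ⟨g, hg, hgK⟩ := exists_hasSubgradientAt_add_mem_orthogonal (K := ker (matApplyₗ U))
    (hgrad xs) hhconv hlip.continuous fun k hk => hmin _ <| by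
      rw [← matApplyₗ_apply, map_add, LinearMap.mem_ker.1 hk, matApplyₗ_apply, hxs, add_zero]
  obtain ⟨_, ⟨y, rfl⟩, hlam⟩ :=
    hT.exists_mem_range_apply_eq (y := -(gf xs + g)) (hT.orthogonal_ker ▸ neg_mem hgK)
  simp only [matApplyₗ_apply] at hlam
  refine ⟨g, matApply U y, hg, by rw [hlam, add_neg_cancel], ?_⟩
  have hy := sum_matApply_eq_zero_of_mulVec_one hU
    (mulVec_one_eq_zero_of_mul_self_eq hU hUU hW1) y
  rw [le_div_iff₀' (Real.sqrt_pos.2 (sub_pos.2 hσ1))]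
  calc √(1 - σ) * ‖matApply U y‖ ≤ ‖matApply U (matApply U y)‖ :=
        sqrt_one_sub_mul_norm_le_norm_matApply hU hUU hσ hy
    _ = ‖gf xs + g‖ := by rw [hlam, norm_neg]
    _ ≤ ‖gf xs‖ + ‖g‖ := norm_add_le _ _
    _ ≤ √m * M + ‖gf xs‖ := by linarith [Real.coe_toNNReal _ hL ▸ hg.norm_le hlip]

theorem stmt11 (m n : ℕ) (hm : 0 < m)
    (W U : Matrix (Fin m) (Fin m) ℝ) (σ : ℝ)
    (hWsymm : W.IsSymm)
    (hW1 : W.mulVec (fun _ => (1 : ℝ)) = fun _ => (1 : ℝ))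
    (hWpsd : W.PosSemidef) (hIW : (1 - W).PosSemidef)
    (hUpsd : U.PosSemidef) (hUU : U * U = 1 - W)
    -- `σ` is (an upper bound for) the second largest eigenvalue of `W`:
    -- it bounds the Rayleigh quotient of `W` on the orthogonal complement of `1`
    (hσ : ∀ v : Fin m → ℝ, (∑ i, v i) = 0 →
      dotProduct v (W.mulVec v) ≤ σ * dotProduct v v)
    (hσ1 : σ < 1)
    (f h : EuclideanSpace ℝ (Fin m × Fin n) → ℝ)
    (gf : EuclideanSpace ℝ (Fin m × Fin n) → EuclideanSpace ℝ (Fin m × Fin n))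
    (hconv : ConvexOn ℝ Set.univ f)
    (hgrad : ∀ x, HasGradientAt f (gf x) x)
    (M : ℝ) (hM : 0 ≤ M)
    (hhconv : ConvexOn ℝ Set.univ h)
    (hhlip : ∀ x y, |h x - h y| ≤ Real.sqrt m * M * ‖x - y‖)
    (xs : EuclideanSpace ℝ (Fin m × Fin n))
    (hxs : matApply U xs = 0)
    (hmin : ∀ y, matApply U y = 0 → f xs + h xs ≤ f y + h y) :
    ∃ g lam : EuclideanSpace ℝ (Fin m × Fin n),
      (∀ y, h xs + ⟪g, y - xs⟫ ≤ h y) ∧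
      gf xs + g + matApply U lam = 0 ∧
      ‖lam‖ ≤ (Real.sqrt m * M + ‖gf xs‖) / Real.sqrt (1 - σ) :=
  stmt11_general m n W U σ hW1 hUpsd hUU hσ hσ1 f h gf hgrad M hM hhconv hhlip xs hxs hmin
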